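/- arXiv:2604.05153 — 2 statements merged into one kernel-verified Lean document; each statement's English description precedes it below -/
import Mathlib

section
/- Let S be a nonempty finite set and f1, f2 : S → ℝ. Suppose every value of f1 is an integer multiple of some g > 0, and let M be a real number with M·g > max_{s∈S} f2(s) − min_{s∈S} f2(s). Then any maximizer of M·f1 − f2 over S is lexicographically optimal for (max f1, min f2). -/
/-! Since `f1` moves in steps of at least `g`, raising `f1` above `f1 s*` gains at least `M·g`
in the weighted sum, more than any change of `f2` can cost; so a maximizer of `M·f1 − f2`
maximizes `f1`, and among the points with the same `f1` it plainly minimizes `f2`. -/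

theorem add_le_of_lt_of_eq_int_mul {R : Type*} [Ring R] [LinearOrder R] [IsStrictOrderedRing R]
    {g a b : R} (hg : 0 < g) {m n : ℤ} (ha : a = m * g) (hb : b = n * g) (hab : a < b) :
    a + g ≤ b := by
  have hmn : m < n := by
    rw [ha, hb] at hab
    exact_mod_cast lt_of_mul_lt_mul_right hab hg.le
  calc a + g = ((m + 1 : ℤ) : R) * g := by rw [ha]; push_cast; rw [add_mul, one_mul]
    _ ≤ b := hb ▸ mul_le_mul_of_nonneg_right (by exact_mod_cast hmn) hg.le

theorem Finset.sub_le_sup'_sub_inf' {ι α : Type*} [AddCommGroup α] [LinearOrder α]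
    [IsOrderedAddMonoid α] {s : Finset ι} (hs : s.Nonempty) (f : ι → α) {i j : ι}
    (hi : i ∈ s) (hj : j ∈ s) : f i - f j ≤ s.sup' hs f - s.inf' hs f :=
  sub_le_sub (s.le_sup' f hi) (s.inf'_le f hj)

theorem sub_lt_mul_sub_of_add_le {K : Type*} [CommRing K] [LinearOrder K]
    [IsStrictOrderedRing K] {M g x₁ x₂ y₁ y₂ : K} (hM : 0 ≤ M)
    (hgap : x₁ + g ≤ y₁) (hlt : y₂ - x₂ < M * g) :
    M * x₁ - x₂ < M * y₁ - y₂ := by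
  have : M * g ≤ M * (y₁ - x₁) := mul_le_mul_of_nonneg_left (by linarith) hM
  linarith

/-- Big-M weighted-sum correctness (lattice-valued primary objective): if every value of
`f1` is an integer multiple of `g > 0` and `M·g` exceeds the range of `f2`, then any
maximizer of `M·f1 − f2` is lexicographically optimal for `(max f1, min f2)`. -/
theorem weighted_sum_lex_optimal_lattice {S : Type*} [Fintype S] [Nonempty S]
    (f1 f2 : S → ℝ) (g : ℝ) (hg : 0 < g)
    (hlat : ∀ s : S, ∃ n : ℤ, f1 s = n * g)
    (M : ℝ)
    (hM : M * g > Finset.univ.sup' Finset.univ_nonempty f2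
            - Finset.univ.inf' Finset.univ_nonempty f2)
    (sstar : S)
    (hopt : ∀ s : S, M * f1 s - f2 s ≤ M * f1 sstar - f2 sstar) :
    (∀ s : S, f1 s ≤ f1 sstar) ∧
    (∀ s : S, f1 s = f1 sstar → f2 sstar ≤ f2 s) := by
  have hrange (s t : S) := Finset.univ.sub_le_sup'_sub_inf' Finset.univ_nonempty f2
    (Finset.mem_univ s) (Finset.mem_univ t)
  have hM₀ : 0 < M := pos_of_mul_pos_left
    (lt_of_le_of_lt (by simpa using hrange sstar sstar) hM) hg.le
  refine ⟨fun s => ?_, fun s heq => ?_⟩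
  · by_contra! hlt
    obtain ⟨n, hn⟩ := hlat s
    obtain ⟨m, hm⟩ := hlat sstar
    exact (hopt s).not_gt <| sub_lt_mul_sub_of_add_le hM₀.le
      (add_le_of_lt_of_eq_int_mul hg hm hn hlt) ((hrange s sstar).trans_lt hM)
  · linarith [heq ▸ hopt s]
end

section
/- Tightness of the big-M bound: there exist a finite set S, functions f1, f2 : S → ℤ, and M₀ = max f2 − min f2 such that the scalarization M₀·f1 − f2 (using weight exactly M₀ instead of M₀ + 1) has a maximizer that is NOT lexicographically optimal for (max f1, min f2). Concretely, S = {A, B} with f1(A) = k−1, f2(A) = 0, f1(B) = k, f2(B) = M₀ > 0 gives equal scalarized values M₀·(k−1) for both, so A maximizes the scalarization but is not lexicographically optimal. -/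
theorem Bool.sup'_univ_sub_inf'_univ {α : Type*} [AddCommGroup α] [LinearOrder α]
    [IsOrderedAddMonoid α] (f : Bool → α) :
    Finset.univ.sup' Finset.univ_nonempty f - Finset.univ.inf' Finset.univ_nonempty f =
      |f true - f false| := by
  simp only [Fintype.univ_bool, Finset.singleton_nonempty, Finset.sup'_insert,
    Finset.sup'_singleton, Finset.inf'_insert, Finset.inf'_singleton]
  exact max_sub_min_eq_abs' (f true) (f false)

/-- Tightness of the big-M bound: with weight exactly `M₀ = max f2 − min f2` (instead of
`M₀ + 1`), the scalarization can have a maximizer that is not lexicographically optimal.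
Here `S = Bool`, `A = false`, `B = true`. -/
theorem bigM_bound_tight (k M0 : ℤ) (hM0 : 0 < M0) :
    let f1 : Bool → ℤ := fun b => if b then k else k - 1
    let f2 : Bool → ℤ := fun b => if b then M0 else 0
    (M0 = Finset.univ.sup' Finset.univ_nonempty f2
          - Finset.univ.inf' Finset.univ_nonempty f2) ∧
    (∀ s : Bool, M0 * f1 s - f2 s ≤ M0 * f1 false - f2 false) ∧
    ¬ (∀ s : Bool, f1 s ≤ f1 false) := by
  intro f1 f2
  refine ⟨?range, ?scalarized_tie, fun h => ?not_lex_optimal⟩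
  case range =>
    rw [Bool.sup'_univ_sub_inf'_univ]
    simp only [f2, if_true, Bool.false_eq_true, if_false, sub_zero, abs_of_pos hM0]
  case scalarized_tie =>
    rintro (_ | _)
    · exact le_rfl
    · exact (show M0 * k - M0 = M0 * (k - 1) - 0 by ring).le
  case not_lex_optimal => simpa [f1] using h true
end
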